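/- arXiv:1405.2547 — 4 statements merged into one kernel-verified Lean document; each statement's English description precedes it below -/
import Mathlib

section
/- Fix k₀ ∈ ℕ, k ≤ k₀, and A ⊆ ℕ. If X and Y are k-graphs each having at least one vertex not in the range of its labeling, then f_A applied to the underlying graph of the gluing X ⊔ₖ Y equals 0. -/
/-- Same-side adjacency on the disjoint union of two graphs. -/
def sumAdj {V₁ V₂ : Type*} (G₁ : SimpleGraph V₁) (G₂ : SimpleGraph V₂) :
    V₁ ⊕ V₂ → V₁ ⊕ V₂ → Prop
  | Sum.inl a, Sum.inl b => G₁.Adj a b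
  | Sum.inr a, Sum.inr b => G₂.Adj a b
  | _, _ => False

lemma sumAdj_symm {V₁ V₂ : Type*} (G₁ : SimpleGraph V₁) (G₂ : SimpleGraph V₂)
    {u v : V₁ ⊕ V₂} (h : sumAdj G₁ G₂ u v) : sumAdj G₁ G₂ v u := by
  cases u <;> cases v <;> simp_all [sumAdj] <;> exact h.symm

/-- The generating relation for gluing two `k`-graphs: identify vertices
carrying the same label. -/
def glueRel {k : ℕ} {V₁ V₂ : Type*} (ℓ₁ : Fin k → Option V₁) (ℓ₂ : Fin k → Option V₂)
    (u v : V₁ ⊕ V₂) : Prop :=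
  ∃ (i : Fin k) (v₁ : V₁) (v₂ : V₂),
    ℓ₁ i = some v₁ ∧ ℓ₂ i = some v₂ ∧ u = Sum.inl v₁ ∧ v = Sum.inr v₂

def glueSetoid {k : ℕ} {V₁ V₂ : Type*} (ℓ₁ : Fin k → Option V₁)
    (ℓ₂ : Fin k → Option V₂) : Setoid (V₁ ⊕ V₂) :=
  Relation.EqvGen.setoid (glueRel ℓ₁ ℓ₂)

/-- The vertex type of the gluing of two `k`-graphs. -/
def GlueVert {k : ℕ} {V₁ V₂ : Type*} (ℓ₁ : Fin k → Option V₁)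
    (ℓ₂ : Fin k → Option V₂) : Type _ :=
  Quotient (glueSetoid ℓ₁ ℓ₂)

def glueMk {k : ℕ} {V₁ V₂ : Type*} (ℓ₁ : Fin k → Option V₁)
    (ℓ₂ : Fin k → Option V₂) (u : V₁ ⊕ V₂) : GlueVert ℓ₁ ℓ₂ :=
  Quotient.mk (glueSetoid ℓ₁ ℓ₂) u

/-- The underlying graph of the gluing of two `k`-graphs. -/
def glueGraph {k : ℕ} {V₁ V₂ : Type*} (G₁ : SimpleGraph V₁) (ℓ₁ : Fin k → Option V₁)
    (G₂ : SimpleGraph V₂) (ℓ₂ : Fin k → Option V₂) :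
    SimpleGraph (GlueVert ℓ₁ ℓ₂) where
  Adj x y := x ≠ y ∧ ∃ u v : V₁ ⊕ V₂,
    glueMk ℓ₁ ℓ₂ u = x ∧ glueMk ℓ₁ ℓ₂ v = y ∧ sumAdj G₁ G₂ u v
  symm := ⟨fun x y ⟨hne, u, v, hu, hv, h⟩ => ⟨hne.symm, v, u, hv, hu, sumAdj_symm G₁ G₂ h⟩⟩
  loopless := ⟨fun x h => h.1 rfl⟩

/-- The labeling of the gluing of two `k`-graphs. -/
def glueLabel {k : ℕ} {V₁ V₂ : Type*} (ℓ₁ : Fin k → Option V₁)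
    (ℓ₂ : Fin k → Option V₂) (i : Fin k) : Option (GlueVert ℓ₁ ℓ₂) :=
  match ℓ₁ i with
  | some v => some (glueMk ℓ₁ ℓ₂ (Sum.inl v))
  | none => (ℓ₂ i).map fun v => glueMk ℓ₁ ℓ₂ (Sum.inr v)

noncomputable instance {k : ℕ} {V₁ V₂ : Type*} [Fintype V₁] [Fintype V₂]
    (ℓ₁ : Fin k → Option V₁) (ℓ₂ : Fin k → Option V₂) : Fintype (GlueVert ℓ₁ ℓ₂) := by
  classical exact Quotient.fintype (glueSetoid ℓ₁ ℓ₂)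

/-- A graph is `m`-connected if it has more than `m` vertices and removing any
fewer than `m` vertices leaves it connected. -/
def IsMConnected {V : Type*} [Fintype V] (m : ℕ) (G : SimpleGraph V) : Prop :=
  m < Fintype.card V ∧ ∀ S : Set V, S.ncard < m → (G.induce Sᶜ).Connected

open Classical in
/-- The graph parameter `f_A`: the number of vertices if the graph is
`(k₀+1)`-connected with number of vertices in `A`, and `0` otherwise. -/
noncomputable def fA (k₀ : ℕ) (A : Set ℕ) {V : Type*} [Fintype V] (G : SimpleGraph V) : ℝ :=
  if IsMConnected (k₀ + 1) G ∧ Fintype.card V ∈ A then (Fintype.card V : ℝ) else 0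

/-!
The labeled vertices of the gluing form a set `S` of at most `k ≤ k₀` vertices. Gluing only
identifies labeled vertices, so every class outside `S` has a single representative, and an edge
between two such classes comes from an edge of `G₁` or of `G₂`. Hence deleting `S` separates an
unlabeled vertex of `G₁` from an unlabeled vertex of `G₂`, and the gluing is not
`(k₀ + 1)`-connected.
-/

namespace Glue

open Relation

variable {k : ℕ} {V₁ V₂ : Type*} {ℓ₁ : Fin k → Option V₁} {ℓ₂ : Fin k → Option V₂}

def IsLabeled (ℓ₁ : Fin k → Option V₁) (ℓ₂ : Fin k → Option V₂) : V₁ ⊕ V₂ → Prop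
  | Sum.inl v => ∃ i, ℓ₁ i = some v
  | Sum.inr v => ∃ i, ℓ₂ i = some v

lemma isLabeled_of_eqvGen {u v : V₁ ⊕ V₂} (h : EqvGen (glueRel ℓ₁ ℓ₂) u v) :
    u = v ∨ (IsLabeled ℓ₁ ℓ₂ u ∧ IsLabeled ℓ₁ ℓ₂ v) := by
  induction h with
  | rel _ _ hrel =>
    obtain ⟨i, v₁, v₂, h₁, h₂, rfl, rfl⟩ := hrel
    exact .inr ⟨⟨i, h₁⟩, ⟨i, h₂⟩⟩
  | refl => exact .inl rfl
  | symm _ _ _ ih => exact ih.imp Eq.symm And.symm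
  | trans _ _ _ _ _ ih₁ ih₂ =>
    rcases ih₁ with rfl | ⟨hu, hv⟩
    · exact ih₂
    · rcases ih₂ with rfl | ⟨-, hw⟩
      · exact .inr ⟨hu, hv⟩
      · exact .inr ⟨hu, hw⟩

lemma eq_of_glueMk_eq {u v : V₁ ⊕ V₂} (hu : ¬IsLabeled ℓ₁ ℓ₂ u)
    (h : glueMk ℓ₁ ℓ₂ u = glueMk ℓ₁ ℓ₂ v) : u = v :=
  (isLabeled_of_eqvGen (Quotient.eq''.mp h)).resolve_right fun h ↦ hu h.1

def labelSet (ℓ₁ : Fin k → Option V₁) (ℓ₂ : Fin k → Option V₂) : Set (GlueVert ℓ₁ ℓ₂) :=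
  Option.some ⁻¹' Set.range (glueLabel ℓ₁ ℓ₂)

lemma ncard_labelSet_le : (labelSet ℓ₁ ℓ₂).ncard ≤ k :=
  calc (labelSet ℓ₁ ℓ₂).ncard
      ≤ (Set.range (glueLabel ℓ₁ ℓ₂)).ncard :=
        Set.ncard_le_ncard_of_injOn some (fun _ ↦ id) (Option.some_injective _).injOn
          (Set.finite_range _)
    _ ≤ (Set.univ : Set (Fin k)).ncard := by
        rw [← Set.image_univ]; exact Set.ncard_image_le
    _ = k := by simp

lemma glueMk_mem_labelSet {u : V₁ ⊕ V₂} (hu : IsLabeled ℓ₁ ℓ₂ u) :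
    glueMk ℓ₁ ℓ₂ u ∈ labelSet ℓ₁ ℓ₂ := by
  cases u with
  | inl x =>
    obtain ⟨i, hi⟩ := hu
    exact ⟨i, by simp [glueLabel, hi]⟩
  | inr y =>
    obtain ⟨i, hi⟩ := hu
    refine ⟨i, ?_⟩
    cases h₁ : ℓ₁ i with
    | none => simp [glueLabel, h₁, hi]
    | some x =>
      simp only [glueLabel, h₁, Option.some.injEq]
      exact Quotient.sound (EqvGen.rel _ _ ⟨i, x, y, h₁, hi, rfl, rfl⟩)

lemma glueMk_mem_labelSet_iff {u : V₁ ⊕ V₂} :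
    glueMk ℓ₁ ℓ₂ u ∈ labelSet ℓ₁ ℓ₂ ↔ IsLabeled ℓ₁ ℓ₂ u := by
  refine ⟨fun ⟨i, hi⟩ ↦ ?_, glueMk_mem_labelSet⟩
  by_contra hu
  obtain ⟨v, hv, hvu⟩ : ∃ v, IsLabeled ℓ₁ ℓ₂ v ∧ glueMk ℓ₁ ℓ₂ v = glueMk ℓ₁ ℓ₂ u := by
    cases h₁ : ℓ₁ i with
    | some x =>
      simp only [glueLabel, h₁, Option.some.injEq] at hi
      exact ⟨Sum.inl x, ⟨i, h₁⟩, hi⟩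
    | none =>
      simp only [glueLabel, h₁, Option.map_eq_some_iff] at hi
      obtain ⟨y, hy, hyu⟩ := hi
      exact ⟨Sum.inr y, ⟨i, hy⟩, hyu⟩
  exact hu (eq_of_glueMk_eq hu hvu.symm ▸ hv)

variable (G₁ : SimpleGraph V₁) (G₂ : SimpleGraph V₂)

lemma exists_glueMk_inl_of_adj {w : V₁} {y : GlueVert ℓ₁ ℓ₂}
    (hw : ¬IsLabeled ℓ₁ ℓ₂ (Sum.inl w))
    (hadj : (glueGraph G₁ ℓ₁ G₂ ℓ₂).Adj (glueMk ℓ₁ ℓ₂ (Sum.inl w)) y) :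
    ∃ w', glueMk ℓ₁ ℓ₂ (Sum.inl w') = y := by
  obtain ⟨-, u, v, hu, rfl, huv⟩ := hadj
  obtain rfl := (eq_of_glueMk_eq hw hu.symm).symm
  cases v with
  | inl w' => exact ⟨w', rfl⟩
  | inr _ => exact huv.elim

lemma not_connected_induce_compl_labelSet {a : V₁} {b : V₂}
    (ha : ¬IsLabeled ℓ₁ ℓ₂ (Sum.inl a)) (hb : ¬IsLabeled ℓ₁ ℓ₂ (Sum.inr b)) :
    ¬((glueGraph G₁ ℓ₁ G₂ ℓ₂).induce (labelSet ℓ₁ ℓ₂)ᶜ).Connected := by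
  intro hconn
  let left : Set ((labelSet ℓ₁ ℓ₂)ᶜ : Set _) := {x | ∃ w, glueMk ℓ₁ ℓ₂ (Sum.inl w) = x.1}
  have ha' : glueMk ℓ₁ ℓ₂ (Sum.inl a) ∉ labelSet ℓ₁ ℓ₂ := glueMk_mem_labelSet_iff.not.mpr ha
  have hb' : glueMk ℓ₁ ℓ₂ (Sum.inr b) ∉ labelSet ℓ₁ ℓ₂ := glueMk_mem_labelSet_iff.not.mpr hb
  obtain ⟨p⟩ := hconn.preconnected ⟨_, ha'⟩ ⟨_, hb'⟩
  have hb_left : ⟨_, hb'⟩ ∉ left := fun ⟨w, hw⟩ ↦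
    Sum.inl_ne_inr (eq_of_glueMk_eq hb hw.symm).symm
  obtain ⟨d, -, ⟨w, hw⟩, hd⟩ := p.exists_boundary_dart left ⟨a, rfl⟩ hb_left
  have hw_unlabeled : ¬IsLabeled ℓ₁ ℓ₂ (Sum.inl w) :=
    glueMk_mem_labelSet_iff.not.mp (hw ▸ d.fst.2)
  exact hd (exists_glueMk_inl_of_adj G₁ G₂ hw_unlabeled (hw ▸ d.adj))

end Glue

open Glue in
/-- If `k ≤ k₀` and both `k`-graphs have an unlabeled vertex, then `f_A`
vanishes on (the underlying graph of) their gluing. -/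
theorem fA_glue_eq_zero (k₀ k : ℕ) (hk : k ≤ k₀) (A : Set ℕ)
    {V₁ V₂ : Type} [Fintype V₁] [Fintype V₂]
    (G₁ : SimpleGraph V₁) (ℓ₁ : Fin k → Option V₁)
    (G₂ : SimpleGraph V₂) (ℓ₂ : Fin k → Option V₂)
    (h₁ : ∃ v : V₁, ∀ i : Fin k, ℓ₁ i ≠ some v)
    (h₂ : ∃ v : V₂, ∀ i : Fin k, ℓ₂ i ≠ some v) :
    fA k₀ A (glueGraph G₁ ℓ₁ G₂ ℓ₂) = 0 := by
  obtain ⟨a, ha⟩ := h₁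
  obtain ⟨b, hb⟩ := h₂
  have hS : (labelSet ℓ₁ ℓ₂).ncard < k₀ + 1 := Nat.lt_succ_of_le (ncard_labelSet_le.trans hk)
  have hnot : ¬IsMConnected (k₀ + 1) (glueGraph G₁ ℓ₁ G₂ ℓ₂) := fun h ↦
    not_connected_induce_compl_labelSet G₁ G₂ (not_exists.mpr ha) (not_exists.mpr hb) (h.2 _ hS)
  simp [fA, hnot]
end

section
/- Fix k₀ ∈ ℕ, k ≤ k₀, and A ⊆ ℕ. Let I be the type of all k-graphs on vertex sets Fin n (i.e. Σ n : ℕ, SimpleGraph (Fin n) × (Fin k → Option (Fin n))) that either have no vertices or have at least one vertex outside the range of the labeling. Then there exist two functions g₁, g₂ : I → ℝ such that for every X ∈ I the row of X in the connection matrix H(f_A, ⊔ₖ), namely the function I → ℝ sending Y to f_A applied to the underlying graph of X ⊔ₖ Y, lies in the ℝ-linear span of {g₁, g₂}; that is, this restricted connection matrix of f_A has rank at most 2. -/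
/-- `k`-graphs on vertex sets `Fin n` that have no vertices or at least one
vertex outside the range of the labeling. -/
def Idx (k : ℕ) :=
  {X : Σ n : ℕ, SimpleGraph (Fin n) × (Fin k → Option (Fin n)) //
    X.1 = 0 ∨ ∃ v : Fin X.1, ∀ i : Fin k, X.2.2 i ≠ some v}


/-!
Gluing the empty `k`-graph to `Y` gives back `Y`, so all rows indexed by an empty `X` equal
`Y ↦ f_A(Y)`. If `X` has an unlabeled vertex `v`, the row vanishes at every `Y` with an unlabeled
vertex `w`: in `X ⊔ₖ Y` a vertex outside the at most `k` glued vertices has a unique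
representative in `V(X) ⊕ V(Y)`, and no edge joins representatives on different sides, so removing
the glued vertices separates `v` from `w` and `X ⊔ₖ Y` is not `(k₀ + 1)`-connected. Such a row is
therefore `f_A(X)` times the indicator of the empty `k`-graph.
-/

open SimpleGraph

lemma ncard_setOf_exists_eq_some_le {k : ℕ} {V : Type*} (ℓ : Fin k → Option V) :
    {v | ∃ i, ℓ i = some v}.ncard ≤ k := by
  calc {v | ∃ i, ℓ i = some v}.ncard
      = (some '' {v | ∃ i, ℓ i = some v}).ncard :=
        (Set.ncard_image_of_injective _ (Option.some_injective V)).symm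
    _ ≤ (Set.range ℓ).ncard :=
        Set.ncard_le_ncard (by rintro _ ⟨v, ⟨i, hi⟩, rfl⟩; exact ⟨i, hi⟩) (Set.finite_range ℓ)
    _ ≤ k := by
        rw [← Set.image_univ]
        exact (Set.ncard_image_le Set.finite_univ).trans (by simp)

lemma IsMConnected.of_iso {V W : Type*} [Fintype V] [Fintype W] {G : SimpleGraph V}
    {H : SimpleGraph W} {m : ℕ} (hG : IsMConnected m G) (e : G ≃g H) : IsMConnected m H := by
  refine ⟨Fintype.card_congr e.toEquiv ▸ hG.1, fun S hS => ?_⟩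
  have hS' : (e ⁻¹' S).ncard < m := by
    rwa [Set.ncard_preimage_of_injective_subset_range e.injective (by simp [e.surjective.range_eq])]
  have hbij : Set.BijOn e (e ⁻¹' S)ᶜ Sᶜ := by
    rw [← Set.preimage_compl]; exact e.bijective.bijOn_preimage
  exact ((e.induce hbij).connected_iff).mp (hG.2 _ hS')

lemma fA_congr {V W : Type*} [Fintype V] [Fintype W] {G : SimpleGraph V} {H : SimpleGraph W}
    (e : G ≃g H) (k₀ : ℕ) (A : Set ℕ) : fA k₀ A G = fA k₀ A H := by
  have hconn : IsMConnected (k₀ + 1) G ↔ IsMConnected (k₀ + 1) H :=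
    ⟨fun h => h.of_iso e, fun h => h.of_iso e.symm⟩
  classical
  unfold fA
  rw [Fintype.card_congr e.toEquiv]
  exact if_congr (and_congr_left' hconn) rfl rfl

def SimpleGraph.Iso.sumEmpty {V W : Type*} (G : SimpleGraph V) (H : SimpleGraph W) [IsEmpty W] :
    G ⊕g H ≃g G :=
  ⟨Equiv.sumEmpty V W, by rintro (u | u) (v | v) <;> first | exact isEmptyElim ‹W› | simp⟩

def SimpleGraph.Iso.emptySum {V W : Type*} (G : SimpleGraph V) (H : SimpleGraph W) [IsEmpty V] :
    G ⊕g H ≃g H :=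
  ⟨Equiv.emptySum V W, by rintro (u | u) (v | v) <;> first | exact isEmptyElim ‹V› | simp⟩

lemma sumAdj_iff {V₁ V₂ : Type*} {G₁ : SimpleGraph V₁} {G₂ : SimpleGraph V₂} {u v : V₁ ⊕ V₂} :
    sumAdj G₁ G₂ u v ↔ (G₁ ⊕g G₂).Adj u v := by
  cases u <;> cases v <;> simp [sumAdj]

section Glue

variable {k : ℕ} {V₁ V₂ : Type*}

def IsGlued (ℓ₁ : Fin k → Option V₁) (ℓ₂ : Fin k → Option V₂) (u : V₁ ⊕ V₂) : Prop :=
  ∃ i v₁ v₂, ℓ₁ i = some v₁ ∧ ℓ₂ i = some v₂ ∧ (u = Sum.inl v₁ ∨ u = Sum.inr v₂)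

variable {ℓ₁ : Fin k → Option V₁} {ℓ₂ : Fin k → Option V₂}

lemma eq_or_isGlued_of_eqvGen {u u' : V₁ ⊕ V₂} (h : Relation.EqvGen (glueRel ℓ₁ ℓ₂) u u') :
    u = u' ∨ IsGlued ℓ₁ ℓ₂ u ∧ IsGlued ℓ₁ ℓ₂ u' := by
  induction h with
  | rel _ _ h =>
    obtain ⟨i, v₁, v₂, h₁, h₂, rfl, rfl⟩ := h
    exact .inr ⟨⟨i, v₁, v₂, h₁, h₂, .inl rfl⟩, ⟨i, v₁, v₂, h₁, h₂, .inr rfl⟩⟩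
  | refl => exact .inl rfl
  | symm _ _ _ ih => exact ih.imp Eq.symm And.symm
  | trans _ _ _ _ _ ih₁ ih₂ =>
    rcases ih₁ with rfl | ⟨ha, hb⟩
    · exact ih₂
    · rcases ih₂ with rfl | ⟨-, hc⟩
      · exact .inr ⟨ha, hb⟩
      · exact .inr ⟨ha, hc⟩

lemma eq_or_isGlued_of_glueMk_eq {u u' : V₁ ⊕ V₂} (h : glueMk ℓ₁ ℓ₂ u = glueMk ℓ₁ ℓ₂ u') :
    u = u' ∨ IsGlued ℓ₁ ℓ₂ u ∧ IsGlued ℓ₁ ℓ₂ u' :=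
  eq_or_isGlued_of_eqvGen (Quotient.exact h)

lemma glueMk_injective (h : ∀ i, ℓ₁ i = none ∨ ℓ₂ i = none) :
    Function.Injective (glueMk ℓ₁ ℓ₂) := by
  intro u u' hu
  refine (eq_or_isGlued_of_glueMk_eq hu).resolve_right ?_
  rintro ⟨⟨i, v₁, v₂, h₁, h₂, -⟩, -⟩
  rcases h i with h | h <;> simp_all

lemma not_isGlued_inl {v : V₁} (hv : ∀ i, ℓ₁ i ≠ some v) : ¬ IsGlued ℓ₁ ℓ₂ (Sum.inl v) := by
  rintro ⟨i, v₁, v₂, h₁, -, h | h⟩ <;> simp_all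

lemma not_isGlued_inr {w : V₂} (hw : ∀ i, ℓ₂ i ≠ some w) : ¬ IsGlued ℓ₁ ℓ₂ (Sum.inr w) := by
  rintro ⟨i, v₁, v₂, -, h₂, h | h⟩ <;> simp_all

variable (ℓ₁ ℓ₂) in
def gluedSet : Set (GlueVert ℓ₁ ℓ₂) := glueMk ℓ₁ ℓ₂ '' {u | IsGlued ℓ₁ ℓ₂ u}

lemma isGlued_of_glueMk_mem_gluedSet {u : V₁ ⊕ V₂} (h : glueMk ℓ₁ ℓ₂ u ∈ gluedSet ℓ₁ ℓ₂) :
    IsGlued ℓ₁ ℓ₂ u := by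
  obtain ⟨u', hu', he⟩ := h
  rcases eq_or_isGlued_of_glueMk_eq he with rfl | ⟨-, hu⟩
  exacts [hu', hu]

lemma eq_of_glueMk_eq_of_notMem_gluedSet {u u' : V₁ ⊕ V₂}
    (hu : glueMk ℓ₁ ℓ₂ u ∉ gluedSet ℓ₁ ℓ₂) (h : glueMk ℓ₁ ℓ₂ u = glueMk ℓ₁ ℓ₂ u') : u = u' :=
  (eq_or_isGlued_of_glueMk_eq h).resolve_right fun hg => hu ⟨u, hg.1, rfl⟩

lemma out_glueMk_of_notMem_gluedSet {u : V₁ ⊕ V₂} (hu : glueMk ℓ₁ ℓ₂ u ∉ gluedSet ℓ₁ ℓ₂) :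
    Quotient.out (s := glueSetoid ℓ₁ ℓ₂) (glueMk ℓ₁ ℓ₂ u) = u :=
  (eq_of_glueMk_eq_of_notMem_gluedSet hu (Quotient.out_eq _).symm).symm

lemma gluedSet_subset_labels : gluedSet ℓ₁ ℓ₂ ⊆ {c | ∃ i, glueLabel ℓ₁ ℓ₂ i = some c} := by
  rintro _ ⟨u, ⟨i, v₁, v₂, h₁, h₂, rfl | rfl⟩, rfl⟩
  · exact ⟨i, by simp [glueLabel, h₁]⟩
  · refine ⟨i, ?_⟩
    simp only [glueLabel, h₁, Option.some.injEq]
    exact Quotient.sound (.rel _ _ ⟨i, v₁, v₂, h₁, h₂, rfl, rfl⟩)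

lemma ncard_gluedSet_le [Fintype V₁] [Fintype V₂] : (gluedSet ℓ₁ ℓ₂).ncard ≤ k :=
  (Set.ncard_le_ncard gluedSet_subset_labels (Set.toFinite _)).trans
    (ncard_setOf_exists_eq_some_le _)

end Glue

section GlueGraph

variable {k : ℕ} {V₁ V₂ : Type*} {G₁ : SimpleGraph V₁} {G₂ : SimpleGraph V₂}
  {ℓ₁ : Fin k → Option V₁} {ℓ₂ : Fin k → Option V₂}

noncomputable def sumGlueIso (h : ∀ i, ℓ₁ i = none ∨ ℓ₂ i = none) :
    G₁ ⊕g G₂ ≃g glueGraph G₁ ℓ₁ G₂ ℓ₂ where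
  toEquiv := Equiv.ofBijective (glueMk ℓ₁ ℓ₂) ⟨glueMk_injective h, Quotient.mk_surjective⟩
  map_rel_iff' {u u'} := by
    have hinj := glueMk_injective h
    refine ⟨fun ⟨_, x, y, hx, hy, hxy⟩ => ?_, fun hadj => ?_⟩
    · rw [hinj hx, hinj hy] at hxy
      exact sumAdj_iff.mp hxy
    · exact ⟨hinj.ne hadj.ne, u, u', rfl, rfl, sumAdj_iff.mpr hadj⟩

lemma fA_glueGraph_of_isEmpty_left [Fintype V₁] [Fintype V₂] [IsEmpty V₁] (k₀ : ℕ) (A : Set ℕ) :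
    fA k₀ A (glueGraph G₁ ℓ₁ G₂ ℓ₂) = fA k₀ A G₂ :=
  (fA_congr ((Iso.emptySum G₁ G₂).symm.trans
    (sumGlueIso fun _ => .inl (Subsingleton.elim _ _))) k₀ A).symm

lemma fA_glueGraph_of_isEmpty_right [Fintype V₁] [Fintype V₂] [IsEmpty V₂] (k₀ : ℕ) (A : Set ℕ) :
    fA k₀ A (glueGraph G₁ ℓ₁ G₂ ℓ₂) = fA k₀ A G₁ :=
  (fA_congr ((Iso.sumEmpty G₁ G₂).symm.trans
    (sumGlueIso fun _ => .inr (Subsingleton.elim _ _))) k₀ A).symm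

/-- Outside the glued vertices every vertex of the gluing has a single representative, which
remembers the side it comes from. -/
noncomputable def outsideGluedHom :
    (glueGraph G₁ ℓ₁ G₂ ℓ₂).induce (gluedSet ℓ₁ ℓ₂)ᶜ →g G₁ ⊕g G₂ where
  toFun c := Quotient.out (s := glueSetoid ℓ₁ ℓ₂) c.1
  map_rel' := by
    rintro ⟨_, hc⟩ ⟨_, hd⟩ ⟨-, u, u', rfl, rfl, h⟩
    change (G₁ ⊕g G₂).Adj (Quotient.out (glueMk ℓ₁ ℓ₂ u)) (Quotient.out (glueMk ℓ₁ ℓ₂ u'))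
    rw [out_glueMk_of_notMem_gluedSet hc, out_glueMk_of_notMem_gluedSet hd]
    exact sumAdj_iff.mp h

lemma glueMk_inl_notMem_gluedSet {v : V₁} (hv : ∀ i, ℓ₁ i ≠ some v) :
    glueMk ℓ₁ ℓ₂ (.inl v) ∉ gluedSet ℓ₁ ℓ₂ :=
  fun h => not_isGlued_inl hv (isGlued_of_glueMk_mem_gluedSet h)

lemma glueMk_inr_notMem_gluedSet {w : V₂} (hw : ∀ i, ℓ₂ i ≠ some w) :
    glueMk ℓ₁ ℓ₂ (.inr w) ∉ gluedSet ℓ₁ ℓ₂ :=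
  fun h => not_isGlued_inr hw (isGlued_of_glueMk_mem_gluedSet h)

/-- The at most `k` glued vertices separate an unlabeled vertex of one side from one of the
other side. -/
lemma not_isMConnected_glueGraph [Fintype V₁] [Fintype V₂] {m : ℕ} (hm : k < m)
    {v : V₁} (hv : ∀ i, ℓ₁ i ≠ some v) {w : V₂} (hw : ∀ i, ℓ₂ i ≠ some w) :
    ¬ IsMConnected m (glueGraph G₁ ℓ₁ G₂ ℓ₂) := by
  intro h
  have hv' := glueMk_inl_notMem_gluedSet (ℓ₂ := ℓ₂) hv
  have hw' := glueMk_inr_notMem_gluedSet (ℓ₁ := ℓ₁) hw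
  have hreach := (h.2 _ (ncard_gluedSet_le.trans_lt hm)).preconnected ⟨_, hv'⟩ ⟨_, hw'⟩
  refine not_reachable_sum_inl_inr (G := G₁) (H := G₂) v w ?_
  convert hreach.map outsideGluedHom
  exacts [(out_glueMk_of_notMem_gluedSet hv').symm, (out_glueMk_of_notMem_gluedSet hw').symm]

lemma fA_glueGraph_eq_zero [Fintype V₁] [Fintype V₂] {k₀ : ℕ} (hk : k ≤ k₀) (A : Set ℕ)
    {v : V₁} (hv : ∀ i, ℓ₁ i ≠ some v) {w : V₂} (hw : ∀ i, ℓ₂ i ≠ some w) :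
    fA k₀ A (glueGraph G₁ ℓ₁ G₂ ℓ₂) = 0 :=
  if_neg fun h => not_isMConnected_glueGraph (Nat.lt_succ_of_le hk) hv hw h.1

end GlueGraph

/-- The restricted connection matrix of `f_A` has rank at most `2`: there are
two functions `g₁, g₂` such that every row lies in their `ℝ`-linear span. -/
theorem fA_connection_matrix_rank_le_two (k₀ k : ℕ) (hk : k ≤ k₀) (A : Set ℕ) :
    ∃ g₁ g₂ : Idx k → ℝ, ∀ X : Idx k,
      (fun Y : Idx k => fA k₀ A (glueGraph X.1.2.1 X.1.2.2 Y.1.2.1 Y.1.2.2)) ∈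
        Submodule.span ℝ ({g₁, g₂} : Set (Idx k → ℝ)) := by
  refine ⟨fun Y => fA k₀ A Y.1.2.1, fun Y => if Y.1.1 = 0 then 1 else 0, fun X => ?_⟩
  rcases X.2 with hX | ⟨v, hv⟩
  · have : IsEmpty (Fin X.1.1) := by rw [hX]; infer_instance
    exact Submodule.subset_span (Or.inl (funext fun Y => fA_glueGraph_of_isEmpty_left k₀ A))
  · refine Submodule.mem_span_pair.mpr ⟨0, fA k₀ A X.1.2.1, funext fun Y => ?_⟩
    rcases Y.2 with hY | ⟨w, hw⟩
    · have : IsEmpty (Fin Y.1.1) := by rw [hY]; infer_instance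
      simp [hY, fA_glueGraph_of_isEmpty_right]
    · simp [fA_glueGraph_eq_zero hk A hv hw, (Fin.pos w).ne']
end

section
/- Fix r ∈ ℕ and A ⊆ ℕ. Let J be the type of all 2-colored graphs on vertex sets Fin n (i.e. Σ n : ℕ, SimpleGraph (Fin n) × (Fin 2 → Set (Fin n))) whose underlying graph is r-regular (every vertex has degree exactly r; this includes the empty graph). Then there exist two functions g₁, g₂ : J → ℝ such that for every X ∈ J the row of X in the join matrix H(g_A^r, η̄_{1,2}), namely the function J → ℝ sending Y to g_A^r applied to the underlying graph of η̄_{1,2}(X,Y), lies in the ℝ-linear span of {g₁, g₂}; that is, this restricted join matrix of g_A^r has rank at most 2. -/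
/-- The disjoint union of two simple graphs. -/
def sumGraph {V₁ V₂ : Type*} (G₁ : SimpleGraph V₁) (G₂ : SimpleGraph V₂) :
    SimpleGraph (V₁ ⊕ V₂) where
  Adj := sumAdj G₁ G₂
  symm := ⟨fun _ _ h => sumAdj_symm G₁ G₂ h⟩
  loopless := ⟨fun u => by cases u <;> simp [sumAdj]⟩

/-- The coloring of the disjoint union of two `k`-colored graphs. -/
def joinColor {k : ℕ} {V₁ V₂ : Type*} (C₁ : Fin k → Set V₁) (C₂ : Fin k → Set V₂)
    (ℓ : Fin k) : Set (V₁ ⊕ V₂) :=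
  Sum.inl '' C₁ ℓ ∪ Sum.inr '' C₂ ℓ

/-- The underlying graph of the `(i,j)`-join of two `k`-colored graphs. -/
def joinGraph {k : ℕ} (i j : Fin k) {V₁ V₂ : Type*}
    (G₁ : SimpleGraph V₁) (C₁ : Fin k → Set V₁)
    (G₂ : SimpleGraph V₂) (C₂ : Fin k → Set V₂) : SimpleGraph (V₁ ⊕ V₂) where
  Adj u v := u ≠ v ∧ (sumAdj G₁ G₂ u v ∨
    (u ∈ joinColor C₁ C₂ i ∧ v ∈ joinColor C₁ C₂ j) ∨
    (u ∈ joinColor C₁ C₂ j ∧ v ∈ joinColor C₁ C₂ i))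
  symm := ⟨fun u v => fun ⟨hne, h⟩ => ⟨hne.symm, by
    rcases h with h | h | h
    · exact Or.inl (sumAdj_symm G₁ G₂ h)
    · exact Or.inr (Or.inr ⟨h.2, h.1⟩)
    · exact Or.inr (Or.inl ⟨h.2, h.1⟩)⟩⟩
  loopless := ⟨fun u h => h.1 rfl⟩


/-- A graph is `r`-regular if every vertex has exactly `r` neighbors. -/
def RegularDeg {V : Type*} (r : ℕ) (G : SimpleGraph V) : Prop :=
  ∀ v : V, (G.neighborSet v).ncard = r

open Classical in
/-- The graph parameter `g_A^r`: the number of vertices if the graph is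
`r`-regular, connected, with number of vertices in `A`, and `0` otherwise. -/
noncomputable def gAr (r : ℕ) (A : Set ℕ) {V : Type*} [Fintype V] (G : SimpleGraph V) : ℝ :=
  if RegularDeg r G ∧ G.Connected ∧ Fintype.card V ∈ A then (Fintype.card V : ℝ) else 0

/-- `2`-colored graphs on vertex sets `Fin n` whose underlying graph is
`r`-regular. -/
def Jdx (r : ℕ) :=
  {X : Σ n : ℕ, SimpleGraph (Fin n) × (Fin 2 → Set (Fin n)) // RegularDeg r X.2.1}

/-!
If `X` is `r`-regular and both `X` and `Y` have a vertex, their join is never counted by `g_A^r`: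
an edge between the two sides gives its endpoint in `X` degree `r + 1`, and without such an edge the
join is disconnected. So the join matrix vanishes outside the row and the column of the empty
graph, and every row is a combination of the empty graph's row and the indicator of its column.
-/

theorem mem_span_row_single_of_eq_zero {ι R : Type*} [DecidableEq ι] [Semiring R]
    (M : ι → ι → R) (e : ι) (hM : ∀ x y, x ≠ e → y ≠ e → M x y = 0) (x : ι) :
    M x ∈ Submodule.span R ({M e, Pi.single e 1} : Set (ι → R)) := by
  by_cases hx : x = e
  · subst hx
    exact Submodule.subset_span (Set.mem_insert _ _)
  refine Submodule.mem_span_pair.2 ⟨0, M x e, funext fun y => ?_⟩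
  by_cases hy : y = e
  · subst hy
    simp
  · simp [hy, hM x y hx hy]

section JoinGraph

variable {k : ℕ} {i j : Fin k} {V₁ V₂ : Type*}
  {G₁ : SimpleGraph V₁} {C₁ : Fin k → Set V₁} {G₂ : SimpleGraph V₂} {C₂ : Fin k → Set V₂}

theorem joinGraph_adj_inl_inl {a b : V₁} (h : G₁.Adj a b) :
    (joinGraph i j G₁ C₁ G₂ C₂).Adj (Sum.inl a) (Sum.inl b) :=
  ⟨by simpa using G₁.ne_of_adj h, Or.inl h⟩

theorem ncard_neighborSet_joinGraph_inl [Finite V₁] [Finite V₂] {a : V₁} {b : V₂}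
    (hab : (joinGraph i j G₁ C₁ G₂ C₂).Adj (Sum.inl a) (Sum.inr b)) :
    (G₁.neighborSet a).ncard + 1 ≤ ((joinGraph i j G₁ C₁ G₂ C₂).neighborSet (Sum.inl a)).ncard := by
  have hsub : insert (Sum.inr b) (Sum.inl '' G₁.neighborSet a) ⊆
      (joinGraph i j G₁ C₁ G₂ C₂).neighborSet (Sum.inl a) := by
    rintro x (rfl | ⟨y, hy, rfl⟩)
    · exact hab
    · exact joinGraph_adj_inl_inl hy
  calc (G₁.neighborSet a).ncard + 1
      = (insert (Sum.inr b) (Sum.inl '' G₁.neighborSet a)).ncard := by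
        rw [Set.ncard_insert_of_notMem (by simp) (Set.toFinite _),
          Set.ncard_image_of_injective _ Sum.inl_injective]
    _ ≤ _ := Set.ncard_le_ncard hsub (Set.toFinite _)

theorem not_connected_joinGraph_of_forall_not_adj [Nonempty V₁] [Nonempty V₂]
    (h : ∀ a b, ¬ (joinGraph i j G₁ C₁ G₂ C₂).Adj (Sum.inl a) (Sum.inr b)) :
    ¬ (joinGraph i j G₁ C₁ G₂ C₂).Connected := by
  have isLeft_eq_of_adj : ∀ {x y : V₁ ⊕ V₂},
      (joinGraph i j G₁ C₁ G₂ C₂).Adj x y → x.isLeft = y.isLeft := by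
    rintro (a | a) (b | b) hxy
    · rfl
    · exact (h a b hxy).elim
    · exact (h b a hxy.symm).elim
    · rfl
  have isLeft_eq_of_walk : ∀ {x y : V₁ ⊕ V₂},
      (joinGraph i j G₁ C₁ G₂ C₂).Walk x y → x.isLeft = y.isLeft := by
    intro x y p
    induction p with
    | nil => rfl
    | cons hadj _ ih => exact (isLeft_eq_of_adj hadj).trans ih
  intro hconn
  obtain ⟨p⟩ := hconn.preconnected (Sum.inl (Classical.arbitrary V₁))
    (Sum.inr (Classical.arbitrary V₂))
  simpa using isLeft_eq_of_walk p

theorem gAr_joinGraph_eq_zero (r : ℕ) (A : Set ℕ) [Fintype V₁] [Fintype V₂]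
    [Nonempty V₁] [Nonempty V₂] (h₁ : RegularDeg r G₁) :
    gAr r A (joinGraph i j G₁ C₁ G₂ C₂) = 0 := by
  rw [gAr, if_neg]
  rintro ⟨hreg, hconn, -⟩
  by_cases hcross : ∃ a b, (joinGraph i j G₁ C₁ G₂ C₂).Adj (Sum.inl a) (Sum.inr b)
  · obtain ⟨a, b, hab⟩ := hcross
    have := ncard_neighborSet_joinGraph_inl hab
    rw [h₁ a, hreg (Sum.inl a)] at this
    omega
  · push Not at hcross
    exact not_connected_joinGraph_of_forall_not_adj hcross hconn

end JoinGraph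

namespace Jdx

def empty (r : ℕ) : Jdx r := ⟨⟨0, ⊥, fun _ => ∅⟩, fun v => v.elim0⟩

theorem nonempty_of_ne_empty {r : ℕ} {X : Jdx r} (hX : X ≠ empty r) : Nonempty (Fin X.1.1) := by
  obtain ⟨⟨n, G, C⟩, hreg⟩ := X
  refine Fin.pos_iff_nonempty.1 (Nat.pos_of_ne_zero fun hn => hX ?_)
  subst hn
  refine Subtype.ext (Sigma.ext rfl (heq_of_eq (Prod.ext ?_ (funext fun _ => ?_))))
  · ext v
    exact v.elim0
  · ext v
    exact v.elim0

end Jdx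

/-- The restricted join matrix of `g_A^r` has rank at most `2`: there are two
functions `g₁, g₂` such that every row lies in their `ℝ`-linear span. -/
theorem gAr_join_matrix_rank_le_two (r : ℕ) (A : Set ℕ) :
    ∃ g₁ g₂ : Jdx r → ℝ, ∀ X : Jdx r,
      (fun Y : Jdx r =>
        gAr r A (joinGraph (0 : Fin 2) (1 : Fin 2) X.1.2.1 X.1.2.2 Y.1.2.1 Y.1.2.2)) ∈
        Submodule.span ℝ ({g₁, g₂} : Set (Jdx r → ℝ)) := by
  classical
  let M : Jdx r → Jdx r → ℝ := fun X Y =>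
    gAr r A (joinGraph (0 : Fin 2) (1 : Fin 2) X.1.2.1 X.1.2.2 Y.1.2.1 Y.1.2.2)
  refine ⟨M (Jdx.empty r), Pi.single (Jdx.empty r) 1,
    mem_span_row_single_of_eq_zero M (Jdx.empty r) fun X Y hX hY => ?_⟩
  have := Jdx.nonempty_of_ne_empty hX
  have := Jdx.nonempty_of_ne_empty hY
  exact gAr_joinGraph_eq_zero r A X.2
end

section
/- Let R be the tropical semiring over the reals, let I and J be index types, and let M : I → J → R be a matrix; let W be the R-subsemimodule of J → R spanned by the rows of M (i.e. W = Submodule.span R (Set.range (fun i => M i))). Suppose W has row-rank m, i.e. W has a basis of cardinality m and no basis of W has cardinality smaller than m. Then there exist m rows of M forming a basis of W: there is an injective map σ : Fin m → I such that the set {M (σ p) : p ∈ Fin m} is linearly independent and its R-span equals W. -/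
/-- The tropical semiring over the reals: `ℝ ∪ {∞}` with `min` as addition and
`+` as multiplication. -/
abbrev Trop := Tropical (WithTop ℝ)

/-- A set `P` in a `Trop`-semimodule is linearly independent if no element of
`P` lies in the tropical span of the remaining elements. -/
def TropIndep {N : Type*} [AddCommMonoid N] [Module Trop N] (P : Set N) : Prop :=
  ∀ p ∈ P, p ∉ Submodule.span Trop (P \ {p})

/-- A basis of a subsemimodule `W` is a linearly independent set whose tropical
span is `W`. -/
def IsTropBasis {N : Type*} [AddCommMonoid N] [Module Trop N]
    (W : Submodule Trop N) (P : Set N) : Prop :=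
  TropIndep P ∧ Submodule.span Trop P = W

open Tropical

lemma aux_lt_add (g : WithTop ℝ) (hg : 0 < g) (a : ℝ) : (a : WithTop ℝ) < g + a := by
  induction g using WithTop.recTopCoe with
  | top => simp
  | coe g =>
    rw [← WithTop.coe_add, WithTop.coe_lt_coe]
    have : (0:ℝ) < g := by exact_mod_cast hg
    linarith

lemma aux_nle_add (g : WithTop ℝ) (hg : g < 0) (a : ℝ) : ¬ ((a : WithTop ℝ) ≤ g + a) := by
  intro h
  lift g to ℝ using (hg.trans (by norm_num)).ne
  rw [← WithTop.coe_add, WithTop.coe_le_coe] at h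
  have : (g:ℝ) < 0 := by exact_mod_cast hg
  linarith

/-- Core scalar/vector lemma: if `γ • p + r = p` then `γ = 1`, or `r = p`, or `p = 0`. -/
lemma key {J : Type} (γ : Trop) (p r : J → Trop) (h : γ • p + r = p) :
    γ = 1 ∨ r = p ∨ p = 0 := by
  have hj : ∀ j, min (untrop γ + untrop (p j)) (untrop (r j)) = untrop (p j) := by
    intro j
    have := congrFun h j
    simp only [Pi.add_apply, Pi.smul_apply, smul_eq_mul] at this
    have := congrArg untrop this
    rwa [untrop_add, untrop_mul] at this
  rcases lt_trichotomy (untrop γ) 0 with hg | hg | hg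
  · right; right
    funext j
    have hle := min_le_left (untrop γ + untrop (p j)) (untrop (r j))
    rw [hj j] at hle
    have htop : untrop (p j) = ⊤ := by
      by_contra htop
      lift (untrop (p j)) to ℝ using htop with a ha
      exact aux_nle_add _ hg a hle
    have : p j = 0 := untrop_injective (by rw [htop, untrop_zero])
    simpa using this
  · left; exact untrop_injective (by rw [hg, untrop_one])
  · right; left
    funext j
    apply untrop_injective
    rcases min_eq_iff.mp (hj j) with ⟨h1, h2⟩ | ⟨h1, _⟩
    · rcases eq_or_ne (untrop (p j)) ⊤ with ht | ht
      · rw [ht] at h2 ⊢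
        rw [add_top] at h2
        exact top_le_iff.mp h2
      · exfalso
        lift (untrop (p j)) to ℝ using ht with a ha
        exact (ne_of_gt (aux_lt_add _ hg a)) h1
    · exact h1

lemma indep_ne_zero {J : Type} {P : Set (J → Trop)} (hP : TropIndep P) {p : J → Trop}
    (hp : p ∈ P) : p ≠ 0 := by
  intro h0
  exact hP p hp (h0 ▸ Submodule.zero_mem _)

lemma extremal {J : Type} {P : Set (J → Trop)} (hP : TropIndep P) {p : J → Trop} (hp : p ∈ P)
    {a b : J → Trop} (ha : a ∈ Submodule.span Trop P) (hb : b ∈ Submodule.span Trop P)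
    (hab : a + b = p) : a = p ∨ b = p := by
  have hins : insert p (P \ {p}) = P := by
    rw [Set.insert_diff_singleton]
    exact Set.insert_eq_of_mem hp
  rw [← hins, Submodule.mem_span_insert] at ha hb
  obtain ⟨α, a', ha', rfl⟩ := ha
  obtain ⟨β, b', hb', rfl⟩ := hb
  have hre : (α + β) • p + (a' + b') = p := by
    have : (α + β) • p + (a' + b') = α • p + a' + (β • p + b') := by
      rw [add_smul]; abel
    rw [this, hab]
  rcases key (α + β) p (a' + b') hre with h1 | h1 | h1
  · -- α + β = 1, i.e. min(untrop α, untrop β) = 0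
    have := congrArg untrop h1
    rw [untrop_add, untrop_one] at this
    have hcase : α = 1 ∨ β = 1 := by
      rcases min_eq_iff.mp this with ⟨h, _⟩ | ⟨h, _⟩
      · exact Or.inl (untrop_injective (by rw [h, untrop_one]))
      · exact Or.inr (untrop_injective (by rw [h, untrop_one]))
    -- symmetric argument
    have main : ∀ (u v w : J → Trop), u + v = p → w ∈ Submodule.span Trop (P \ {p}) →
        u = p + w → u = p := by
      intro u v w huv _ hu
      funext j
      apply untrop_injective
      apply le_antisymm
      · have := congrArg (fun f => untrop (f j)) hu
        simp only [Pi.add_apply, untrop_add] at this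
        rw [this]; exact min_le_left _ _
      · have := congrArg (fun f => untrop (f j)) huv
        simp only [Pi.add_apply, untrop_add] at this
        rw [← this]; exact min_le_left _ _
    rcases hcase with rfl | rfl
    · left
      exact main _ (β • p + b') a' hab ha' (by rw [one_smul])
    · right
      refine main _ (α • p + a') b' ?_ hb' (by rw [one_smul])
      rw [add_comm]; exact hab
  · refine absurd ?_ (hP p hp)
    have h2 : a' + b' ∈ Submodule.span Trop (P \ {p}) := Submodule.add_mem _ ha' hb'
    rwa [h1] at h2
  · exact absurd h1 (indep_ne_zero hP hp)

lemma sum_extremal {J ι : Type} {P : Set (J → Trop)} (hP : TropIndep P) {p : J → Trop}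
    (hp : p ∈ P) (s : Finset ι) (f : ι → (J → Trop))
    (hf : ∀ i ∈ s, f i ∈ Submodule.span Trop P) (hs : ∑ i ∈ s, f i = p) :
    ∃ i ∈ s, f i = p := by
  classical
  induction s using Finset.induction_on with
  | empty =>
    simp at hs
    exact absurd hs.symm (indep_ne_zero hP hp)
  | @insert i s hx ih =>
    rw [Finset.sum_insert hx] at hs
    have h1 : f i ∈ Submodule.span Trop P := hf i (Finset.mem_insert_self i s)
    have h2 : ∑ j ∈ s, f j ∈ Submodule.span Trop P :=
      Submodule.sum_mem _ fun j hj => hf j (Finset.mem_insert_of_mem hj)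
    rcases extremal hP hp h1 h2 hs with h | h
    · exact ⟨i, Finset.mem_insert_self i s, h⟩
    · obtain ⟨j, hj, hjp⟩ := ih (fun j hj => hf j (Finset.mem_insert_of_mem hj)) h
      exact ⟨j, Finset.mem_insert_of_mem hj, hjp⟩

lemma rescale {I J : Type} (M : I → J → Trop) {P : Set (J → Trop)} (hP : TropIndep P)
    (hspan : Submodule.span Trop P = Submodule.span Trop (Set.range fun i : I => M i))
    {p : J → Trop} (hp : p ∈ P) :
    ∃ (i : I) (γ δ : Trop), γ • M i = p ∧ δ • p = M i := by
  have hpW : p ∈ Submodule.span Trop (Set.range fun i : I => M i) := by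
    rw [← hspan]; exact Submodule.subset_span hp
  obtain ⟨c, hcs, hc2⟩ := Submodule.mem_span_set.mp hpW
  rw [Finsupp.sum] at hc2
  have hmem : ∀ x ∈ c.support, c x • x ∈ Submodule.span Trop P := by
    intro x hx
    rw [hspan]
    exact Submodule.smul_mem _ _ (Submodule.subset_span (hcs hx))
  obtain ⟨x, hxs, hxp⟩ := sum_extremal hP hp c.support (fun x => c x • x) hmem hc2
  obtain ⟨i, rfl⟩ := hcs hxs
  refine ⟨i, c (M i), ?_⟩
  have hγ : c (M i) ≠ 0 := by
    intro h0
    rw [h0, zero_smul] at hxp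
    exact indep_ne_zero hP hp hxp.symm
  have hγt : untrop (c (M i)) ≠ ⊤ := by
    intro ht
    exact hγ (untrop_injective (by rw [ht, untrop_zero]))
  lift (untrop (c (M i))) to ℝ using hγt with g hg
  refine ⟨trop (↑(-g)), hxp, ?_⟩
  have hone : trop (↑(-g) : WithTop ℝ) * c (M i) = 1 := by
    apply untrop_injective
    rw [untrop_mul, untrop_trop, untrop_one, ← hg, ← WithTop.coe_add]
    norm_num
  rw [← hxp, smul_smul, hone, one_smul]


/-- If the row semimodule `W` of a tropical matrix `M` has row-rank `m` (it has
a basis of cardinality `m` and no basis of smaller cardinality), then some `m`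
rows of `M` form a basis of `W`. -/
theorem trop_basis_of_rows {I J : Type} (M : I → J → Trop) (m : ℕ)
    (W : Submodule Trop (J → Trop))
    (hW : W = Submodule.span Trop (Set.range fun i : I => M i))
    (hbasis : ∃ P : Set (J → Trop), IsTropBasis W P ∧ Cardinal.mk P = m)
    (hmin : ∀ P : Set (J → Trop), IsTropBasis W P → (m : Cardinal) ≤ Cardinal.mk P) :
    ∃ σ : Fin m → I, Function.Injective σ ∧
      IsTropBasis W (Set.range fun p : Fin m => M (σ p)) := by
  classical
  obtain ⟨P, ⟨hPind, hPspan⟩, hcard⟩ := hbasis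
  have hspan : Submodule.span Trop P = Submodule.span Trop (Set.range fun i : I => M i) :=
    hPspan.trans hW
  have hch : ∀ q : ↥P, ∃ (i : I) (γ δ : Trop), γ • M i = ↑q ∧ δ • (↑q : J → Trop) = M i :=
    fun q => rescale M hPind hspan q.2
  choose ind γ δ h1 h2 using hch
  have hcard' : Cardinal.mk (Fin m) = Cardinal.mk ↥P := by
    rw [hcard, Cardinal.mk_fin]
  obtain ⟨e⟩ : Nonempty (Fin m ≃ ↥P) := Cardinal.eq.mp hcard'
  have hMinj : Function.Injective (fun q : ↥P => M (ind q)) := by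
    intro q q' hqq'
    have hqq2 : M (ind q) = M (ind q') := hqq'
    by_contra hne
    have hne' : (↑q' : J → Trop) ≠ ↑q := fun h => hne (Subtype.ext h).symm
    have h3 : (γ q * δ q') • (↑q' : J → Trop) = ↑q := by
      rw [← smul_smul, h2 q', ← hqq2, h1 q]
    have hmem : (γ q * δ q') • (↑q' : J → Trop) ∈ Submodule.span Trop (P \ {(↑q : J → Trop)}) :=
      Submodule.smul_mem _ _ (Submodule.subset_span ⟨q'.2, hne'⟩)
    rw [h3] at hmem
    exact hPind ↑q q.2 hmem
  refine ⟨fun k => ind (e k), ?_, ?_, ?_⟩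
  · intro k k' hkk'
    exact e.injective (hMinj (congrArg M hkk'))
  · -- TropIndep of range
    intro x hx
    obtain ⟨k, hk⟩ := hx
    set q := e k with hq
    have hxq : x = M (ind q) := hk.symm
    intro hmem
    have hsub : (Set.range fun p : Fin m => M (ind (e p))) \ {x} ⊆
        ↑(Submodule.span Trop (P \ {(↑q : J → Trop)})) := by
      rintro y ⟨⟨k', hk'⟩, hyx⟩
      set q' := e k' with hq'
      have hy' : M (ind q') = y := hk'
      have hne' : (↑q' : J → Trop) ≠ ↑q := by
        intro h
        have hq'q : q' = q := Subtype.ext h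
        exact hyx (by rw [Set.mem_singleton_iff, ← hy', hq'q]; exact hxq.symm)
      have hy2 : y = δ q' • ↑q' := by rw [h2 q', hy']
      rw [hy2]
      exact Submodule.smul_mem _ _ (Submodule.subset_span ⟨q'.2, hne'⟩)
    have hxP : x ∈ Submodule.span Trop (P \ {(↑q : J → Trop)}) :=
      Submodule.span_le.mpr hsub hmem
    have hmem2 : γ q • x ∈ Submodule.span Trop (P \ {(↑q : J → Trop)}) :=
      Submodule.smul_mem _ _ hxP
    have heq : γ q • x = ↑q := by rw [hxq]; exact h1 q
    rw [heq] at hmem2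
    exact hPind ↑q q.2 hmem2
  · -- span = W
    apply le_antisymm
    · rw [Submodule.span_le]
      rintro y ⟨k, hk⟩
      have hy' : M (ind (e k)) = y := hk
      have hy2 : y = δ (e k) • ↑(e k) := by rw [h2 (e k), hy']
      rw [hy2]
      exact Submodule.smul_mem _ _ (hPspan ▸ Submodule.subset_span (e k).2)
    · rw [← hPspan, Submodule.span_le]
      intro p hp
      set q : ↥P := ⟨p, hp⟩ with hqdef
      have hMq : M (ind q) ∈ Set.range fun p : Fin m => M (ind (e p)) :=
        ⟨e.symm q, by simp⟩
      have hpq : p = γ q • M (ind q) := (h1 q).symm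
      rw [hpq]
      exact Submodule.smul_mem _ _ (Submodule.subset_span hMq)
end
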